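/- Let s be a positive integer and n = 4s+2, and let the vertex set of K_n be ℤ_{4s+1} ∪ {∞}. Define t on edges of K_n by, for each i ∈ {0,1,…,4s} (arithmetic on vertex names taken modulo 4s+1): t({j+i, 4s+1−j+i}) = j + i(2s+1) for j ∈ [1,s]; t({∞, i}) = s+1 + i(2s+1); and t({j−1+i, 4s+2−j+i}) = j + i(2s+1) for j ∈ [s+2, 2s+1]. Then t is a well-defined edge labeling of K_n (a bijection onto {1,…,(2s+1)(4s+1)}); t is supermagic with s(t,v) = (4s+1)(4s²+3s+1) for every vertex v; and for every vertex v and every i ∈ {0,1,…,4s}, the label set S(t,v) meets the interval [i(2s+1)+1, (i+1)(2s+1)] in exactly one element. -/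

import Mathlib

open Finset

noncomputable section
open scoped Classical

/-- The vertex set `ℤ_{4s+1} ∪ {∞}` of `K_{4s+2}`; `none` plays the role of `∞`. -/
abbrev Vtx (s : ℕ) := Option (ZMod (4 * s + 1))

/-- Edges of `K_{4s+2}` incident to the vertex `v`. -/
def incV (s : ℕ) (v : Vtx s) : Finset (Sym2 (Vtx s)) :=
  Finset.univ.filter fun e => v ∈ e ∧ ¬ e.IsDiag

namespace Stmt19

def rn (s j : ℕ) : ℕ := if j ≤ s then j else j - 1

def edg (s i j : ℕ) : Sym2 (Vtx s) :=
  if j = s + 1 then Sym2.mk none (some (i : ZMod (4 * s + 1)))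
  else Sym2.mk (some ((i : ZMod (4 * s + 1)) + (rn s j : ZMod (4 * s + 1))))
                (some ((i : ZMod (4 * s + 1)) - (rn s j : ZMod (4 * s + 1))))

def gfun (s k : ℕ) : ℕ :=
  if k = 0 then s + 1 else if k ≤ s then k else if k ≤ 2 * s then k + 1
  else if k ≤ 3 * s then 4 * s + 2 - k else 4 * s + 1 - k

def Jf (s : ℕ) (v : Vtx s) (i : ℕ) : ℕ :=
  match v with
  | none => s + 1
  | some a => gfun s ((a - (i : ZMod (4 * s + 1))).val)

variable {s : ℕ}

lemma castval (a : ZMod (4 * s + 1)) : ((a.val : ℕ) : ZMod (4 * s + 1)) = a :=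
  ZMod.natCast_rightInverse a

lemma cast_inj_of_le {a b : ℕ} (ha : a ≤ 4 * s) (hb : b ≤ 4 * s)
    (h : (a : ZMod (4 * s + 1)) = b) : a = b := by
  have := congrArg ZMod.val h
  rwa [ZMod.val_cast_of_lt (by omega), ZMod.val_cast_of_lt (by omega)] at this

lemma cast_sub' {m : ℕ} (hm : m ≤ 4 * s + 1) :
    ((4 * s + 1 - m : ℕ) : ZMod (4 * s + 1)) = - (m : ZMod (4 * s + 1)) := by
  have h := ZMod.natCast_self (4 * s + 1)
  rw [Nat.cast_sub hm]
  push_cast at h ⊢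
  rw [h]; ring

lemma two_inv : (2 : ZMod (4 * s + 1)) * ((2 * s + 1 : ℕ) : ZMod (4 * s + 1)) = 1 := by
  have h : ((4 * s + 2 : ℕ) : ZMod (4 * s + 1)) = 1 := by
    have h2 := ZMod.natCast_self (4 * s + 1)
    push_cast at h2 ⊢
    rw [show (4 * (s : ZMod (4*s+1)) + 2) = (4 * s + 1) + 1 by ring, h2]; ring
  calc (2 : ZMod (4 * s + 1)) * ((2 * s + 1 : ℕ) : ZMod (4 * s + 1))
      = ((4 * s + 2 : ℕ) : ZMod (4 * s + 1)) := by push_cast; ring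
    _ = 1 := h

lemma cancel_two {x y : ZMod (4 * s + 1)} (h : 2 * x = 2 * y) : x = y := by
  have := congrArg (fun z => ((2 * s + 1 : ℕ) : ZMod (4 * s + 1)) * z) h
  simp only [← mul_assoc, mul_comm ((2 * s + 1 : ℕ) : ZMod (4 * s + 1)) 2, two_inv,
    one_mul] at this
  exact this

lemma val_neg_cast {m : ℕ} (h1 : 1 ≤ m) (h2 : m ≤ 4 * s) :
    ((-(m : ℕ) : ZMod (4 * s + 1))).val = 4 * s + 1 - m := by
  rw [← cast_sub' (by omega), ZMod.val_cast_of_lt (by omega)]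

end Stmt19

namespace Stmt19
variable {s : ℕ}

lemma gfun_eq_self_iff {k : ℕ} (hk : k ≤ 4 * s) : gfun s k = s + 1 ↔ k = 0 := by
  unfold gfun; split_ifs <;> omega

lemma bridge {j k : ℕ} (hj1 : 1 ≤ j) (hj2 : j ≤ 2 * s + 1) (hj3 : j ≠ s + 1)
    (hk : k ≤ 4 * s) :
    (k = rn s j ∨ k = 4 * s + 1 - rn s j) ↔ j = gfun s k := by
  unfold rn gfun; split_ifs <;> omega

lemma mem_edg {v : Vtx s} {i j : ℕ} (hj1 : 1 ≤ j) (hj2 : j ≤ 2 * s + 1) :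
    v ∈ edg s i j ↔ j = Jf s v i := by
  have hρ : j ≠ s + 1 → 1 ≤ rn s j ∧ rn s j ≤ 2 * s := by unfold rn; split_ifs <;> omega
  by_cases hj : j = s + 1
  · subst hj
    cases v with
    | none => simp [edg, Jf]
    | some a =>
      have he : edg s i (s+1) = Sym2.mk none (some ((i : ZMod (4*s+1)))) := by
        unfold edg; rw [if_pos rfl]
      simp only [he, Sym2.mem_iff, Jf]
      have hklt : (a - (↑i : ZMod (4 * s + 1))).val < 4 * s + 1 := ZMod.val_lt _
      constructor
      · rintro (h | h)
        · exact absurd h (by simp)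
        · have h0 : a - (i : ZMod (4 * s + 1)) = 0 := by
            rw [Option.some_inj.mp h]; ring
          rw [h0, ZMod.val_zero, ((gfun_eq_self_iff (by omega)).mpr rfl)]
      · intro h
        right
        have h0 : (a - (i : ZMod (4 * s + 1))).val = 0 :=
          (gfun_eq_self_iff (by omega)).mp h.symm
        have h1 : a - (i : ZMod (4 * s + 1)) = 0 := by
          have := castval (a - (i : ZMod (4 * s + 1)))
          rw [h0] at this; simpa using this.symm
        have : a = (i : ZMod (4 * s + 1)) := by linear_combination h1
        exact congrArg some this
  · cases v with
    | none =>
      have he : edg s i j = Sym2.mk (some ((i : ZMod (4*s+1)) + (rn s j : ℕ)))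
          (some ((i : ZMod (4*s+1)) - (rn s j : ℕ))) := by
        unfold edg; rw [if_neg hj]
      simp only [he, Sym2.mem_iff, Jf]
      constructor
      · rintro (h | h) <;> exact absurd h (by simp)
      · intro h; exact absurd h hj
    | some a =>
      obtain ⟨hρ1, hρ2⟩ := hρ hj
      set x := (i : ZMod (4 * s + 1)) with hx
      set k := (a - x).val with hk
      have hklt : k < 4 * s + 1 := ZMod.val_lt _
      have hax : ((k : ℕ) : ZMod (4 * s + 1)) = a - x := castval _
      have he : edg s i j = Sym2.mk (some (x + (rn s j : ℕ)))
          (some (x - (rn s j : ℕ))) := by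
        unfold edg; rw [if_neg hj]
      simp only [he, Sym2.mem_iff, Option.some_inj, Jf]
      rw [show gfun s ((a - (i : ZMod (4*s+1))).val) = gfun s k from rfl,
        ← bridge hj1 hj2 hj (by omega)]
      constructor
      · rintro (h | h)
        · left
          have h2 : a - x = ((rn s j : ℕ) : ZMod (4 * s + 1)) := by rw [h]; ring
          rw [hk, h2, ZMod.val_cast_of_lt (by omega)]
        · right
          have h2 : a - x = -((rn s j : ℕ) : ZMod (4 * s + 1)) := by rw [h]; ring
          rw [hk, h2, val_neg_cast hρ1 (by omega)]
      · rintro (h | h)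
        · left
          have h2 : ((rn s j : ℕ) : ZMod (4 * s + 1)) = a - x := by rw [← hax, h]
          linear_combination -h2
        · right
          have h2 : a - x = -((rn s j : ℕ) : ZMod (4 * s + 1)) := by
            rw [← hax, h, cast_sub' (by omega)]
          linear_combination h2

end Stmt19

namespace Stmt19
variable {s : ℕ}

lemma edg_inf (s i : ℕ) :
    edg s i (s + 1) = Sym2.mk none (some ((i : ZMod (4 * s + 1)))) := if_pos rfl

lemma edg_fin {i j : ℕ} (hj : j ≠ s + 1) :
    edg s i j = Sym2.mk (some ((i : ZMod (4 * s + 1)) + ((rn s j : ℕ) : ZMod (4 * s + 1))))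
      (some ((i : ZMod (4 * s + 1)) - ((rn s j : ℕ) : ZMod (4 * s + 1)))) := if_neg hj

lemma rn_bounds {j : ℕ} (hj1 : 1 ≤ j) (hj2 : j ≤ 2 * s + 1) (hj : j ≠ s + 1) :
    1 ≤ rn s j ∧ rn s j ≤ 2 * s := by unfold rn; split_ifs <;> omega

lemma gfun_bounds {k : ℕ} (hk : k ≤ 4 * s) : 1 ≤ gfun s k ∧ gfun s k ≤ 2 * s + 1 := by
  unfold gfun; split_ifs <;> omega

lemma Jf_bounds (v : Vtx s) (i : ℕ) : 1 ≤ Jf s v i ∧ Jf s v i ≤ 2 * s + 1 := by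
  cases v with
  | none =>
    show 1 ≤ s + 1 ∧ s + 1 ≤ 2 * s + 1
    omega
  | some a =>
    have := ZMod.val_lt (a - (i : ZMod (4 * s + 1)))
    exact gfun_bounds (by omega)

lemma edg_not_diag {i j : ℕ} (hj1 : 1 ≤ j) (hj2 : j ≤ 2 * s + 1) :
    ¬ (edg s i j).IsDiag := by
  by_cases hj : j = s + 1
  · subst hj; rw [edg_inf, Sym2.mk_isDiag_iff]; simp
  · obtain ⟨hρ1, hρ2⟩ := rn_bounds hj1 hj2 hj
    rw [edg_fin hj, Sym2.mk_isDiag_iff]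
    intro hcontra
    have hcontra' := Option.some_inj.mp hcontra
    have h2 : ((2 * rn s j : ℕ) : ZMod (4 * s + 1)) = 0 := by
      push_cast
      linear_combination hcontra'
    have := congrArg ZMod.val h2
    rw [ZMod.val_cast_of_lt (by omega), ZMod.val_zero] at this
    omega

lemma edg_inj {i j i' j' : ℕ} (hi : i ≤ 4 * s) (hi' : i' ≤ 4 * s)
    (hj1 : 1 ≤ j) (hj2 : j ≤ 2 * s + 1) (hj1' : 1 ≤ j') (hj2' : j' ≤ 2 * s + 1)
    (h : edg s i j = edg s i' j') : i = i' ∧ j = j' := by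
  have hii : i = i' := by
    by_cases hj : j = s + 1 <;> by_cases hj' : j' = s + 1
    · subst hj; subst hj'
      rw [edg_inf, edg_inf] at h
      rcases Sym2.eq_iff.mp h with ⟨_, h2⟩ | ⟨h2, _⟩
      · exact cast_inj_of_le hi hi' (Option.some_inj.mp h2)
      · exact absurd h2 (by simp)
    · exfalso
      have hm : (none : Vtx s) ∈ edg s i j := by
        subst hj; exact (mem_edg (by omega) (by omega)).mpr rfl
      rw [h] at hm
      exact hj' ((mem_edg hj1' hj2').mp hm)
    · exfalso
      have hm : (none : Vtx s) ∈ edg s i' j' := by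
        subst hj'; exact (mem_edg (by omega) (by omega)).mpr rfl
      rw [← h] at hm
      exact hj ((mem_edg hj1 hj2).mp hm)
    · rw [edg_fin hj, edg_fin hj'] at h
      rcases Sym2.eq_iff.mp h with ⟨ha, hb⟩ | ⟨ha, hb⟩ <;>
        · have ha' := Option.some_inj.mp ha
          have hb' := Option.some_inj.mp hb
          exact cast_inj_of_le hi hi' (cancel_two (by linear_combination ha' + hb'))
  subst hii
  obtain ⟨v, hv⟩ : ∃ v : Vtx s, v ∈ edg s i j := ⟨_, Sym2.out_fst_mem _⟩
  have hJ1 := (mem_edg hj1 hj2).mp hv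
  rw [h] at hv
  have hJ2 := (mem_edg hj1' hj2').mp hv
  exact ⟨rfl, hJ1.trans hJ2.symm⟩

lemma edg_surj (e : Sym2 (Vtx s)) (hnd : ¬ e.IsDiag) :
    ∃ i j, i ≤ 4 * s ∧ 1 ≤ j ∧ j ≤ 2 * s + 1 ∧ edg s i j = e := by
  induction e using Sym2.ind with
  | _ x y =>
  rw [Sym2.mk_isDiag_iff] at hnd
  match x, y with
  | none, none => exact absurd rfl hnd
  | none, some a =>
    refine ⟨a.val, s + 1, by have := ZMod.val_lt a; omega, by omega, by omega, ?_⟩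
    rw [edg_inf, castval]
  | some a, none =>
    refine ⟨a.val, s + 1, by have := ZMod.val_lt a; omega, by omega, by omega, ?_⟩
    rw [edg_inf, castval]
    exact Sym2.eq_swap
  | some a, some b =>
    have hab : a ≠ b := fun hh => hnd (by rw [hh])
    set i := (((2 * s + 1 : ℕ) : ZMod (4 * s + 1)) * (a + b)).val with hidef
    have hilt : i < 4 * s + 1 := ZMod.val_lt _
    have hic : ((i : ℕ) : ZMod (4 * s + 1)) = ((2 * s + 1 : ℕ) : ZMod (4 * s + 1)) * (a + b) :=
      castval _
    set c := a - ((i : ℕ) : ZMod (4 * s + 1)) with hcdef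
    have hsum : 2 * ((i : ℕ) : ZMod (4 * s + 1)) = a + b := by
      rw [hic, ← mul_assoc, two_inv, one_mul]
    have hb' : b - ((i : ℕ) : ZMod (4 * s + 1)) = -c := by
      rw [hcdef]; linear_combination -hsum
    have hc0 : c ≠ 0 := by
      intro h0
      apply hab
      have ha2 : a = ((i : ℕ) : ZMod (4 * s + 1)) := by
        have := hcdef; rw [h0] at this; linear_combination -this
      have hb2 : b = ((i : ℕ) : ZMod (4 * s + 1)) := by
        have := hb'; rw [h0, neg_zero] at this; linear_combination this
      rw [ha2, hb2]
    set k := c.val with hkdef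
    have hklt : k < 4 * s + 1 := ZMod.val_lt _
    have hk1 : 1 ≤ k := by
      rcases Nat.eq_zero_or_pos k with h0 | h0
      · exact absurd ((ZMod.val_eq_zero c).mp h0) hc0
      · exact h0
    have hcc : ((k : ℕ) : ZMod (4 * s + 1)) = c := castval _
    obtain ⟨hg1, hg2⟩ := gfun_bounds (s := s) (k := k) (by omega)
    have hgj : gfun s k ≠ s + 1 := fun hh => by
      have := (gfun_eq_self_iff (by omega)).mp hh; omega
    refine ⟨i, gfun s k, by omega, hg1, hg2, ?_⟩
    obtain ⟨hρ1, hρ2⟩ := rn_bounds hg1 hg2 hgj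
    rw [edg_fin hgj]
    rcases (bridge hg1 hg2 hgj (by omega)).mpr rfl with hcase | hcase
    · have hr : ((rn s (gfun s k) : ℕ) : ZMod (4 * s + 1)) = c := by rw [← hcase, hcc]
      have e1 : ((i : ℕ) : ZMod (4 * s + 1)) + c = a := by linear_combination -hcdef
      have e2 : ((i : ℕ) : ZMod (4 * s + 1)) - c = b := by linear_combination -hb'
      rw [hr, e1, e2]
    · have hr : ((rn s (gfun s k) : ℕ) : ZMod (4 * s + 1)) = -c := by
        have h5 : ((4 * s + 1 - rn s (gfun s k) : ℕ) : ZMod (4 * s + 1)) = c := by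
          rw [← hcase, hcc]
        rw [cast_sub' (by omega)] at h5
        linear_combination -h5
      have e1 : ((i : ℕ) : ZMod (4 * s + 1)) + -c = b := by linear_combination -hb'
      have e2 : ((i : ℕ) : ZMod (4 * s + 1)) - -c = a := by linear_combination -hcdef
      rw [hr, e1, e2]
      exact Sym2.eq_swap

end Stmt19

namespace Stmt19
variable {s : ℕ}

lemma sum_gfun : (∑ k ∈ Finset.range (4 * s + 1), gfun s k) = (s + 1) * (4 * s + 1) := by
  have hA : (∑ k ∈ Finset.range s, (k + 1)) = (∑ k ∈ Finset.range s, k) + s := by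
    rw [Finset.sum_add_distrib, Finset.sum_const, Finset.card_range, smul_eq_mul, mul_one]
  have hB : (∑ k ∈ Finset.range s, (s + 2 + k)) = s * (s + 2) + (∑ k ∈ Finset.range s, k) := by
    rw [Finset.sum_add_distrib, Finset.sum_const, Finset.card_range, smul_eq_mul]
  have e1 : (∑ k ∈ Finset.range (s + 1), gfun s k)
      = ((∑ k ∈ Finset.range s, k) + s) + (s + 1) := by
    rw [Finset.sum_range_succ']
    have h' : (∑ k ∈ Finset.range s, gfun s (k + 1)) = ∑ k ∈ Finset.range s, (k + 1) :=
      Finset.sum_congr rfl (fun k hk => by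
        rw [Finset.mem_range] at hk; unfold gfun; split_ifs <;> first | exact (‹False›).elim | omega)
    have h0 : gfun s 0 = s + 1 := by unfold gfun; simp
    rw [h', hA, h0]
  have e2 : (∑ k ∈ Finset.Ico (s + 1) (2 * s + 1), gfun s k)
      = s * (s + 2) + (∑ k ∈ Finset.range s, k) := by
    rw [Finset.sum_Ico_eq_sum_range, show 2 * s + 1 - (s + 1) = s by omega]
    have h' : (∑ k ∈ Finset.range s, gfun s (s + 1 + k))
        = ∑ k ∈ Finset.range s, (s + 2 + k) :=
      Finset.sum_congr rfl (fun k hk => by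
        rw [Finset.mem_range] at hk; unfold gfun; split_ifs <;> first | exact (‹False›).elim | omega)
    rw [h', hB]
  have e3 : (∑ k ∈ Finset.Ico (2 * s + 1) (3 * s + 1), gfun s k)
      = s * (s + 2) + (∑ k ∈ Finset.range s, k) := by
    rw [Finset.sum_Ico_eq_sum_range, show 3 * s + 1 - (2 * s + 1) = s by omega]
    rw [← Finset.sum_range_reflect (fun j => gfun s (2 * s + 1 + j)) s]
    have h' : (∑ j ∈ Finset.range s, gfun s (2 * s + 1 + (s - 1 - j)))
        = ∑ k ∈ Finset.range s, (s + 2 + k) :=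
      Finset.sum_congr rfl (fun k hk => by
        rw [Finset.mem_range] at hk; unfold gfun; split_ifs <;> first | exact (‹False›).elim | omega)
    rw [show (∑ j ∈ Finset.range s, (fun j => gfun s (2 * s + 1 + j)) (s - 1 - j))
        = ∑ j ∈ Finset.range s, gfun s (2 * s + 1 + (s - 1 - j)) from rfl, h', hB]
  have e4 : (∑ k ∈ Finset.Ico (3 * s + 1) (4 * s + 1), gfun s k)
      = (∑ k ∈ Finset.range s, k) + s := by
    rw [Finset.sum_Ico_eq_sum_range, show 4 * s + 1 - (3 * s + 1) = s by omega]
    rw [← Finset.sum_range_reflect (fun j => gfun s (3 * s + 1 + j)) s]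
    have h' : (∑ j ∈ Finset.range s, gfun s (3 * s + 1 + (s - 1 - j)))
        = ∑ k ∈ Finset.range s, (k + 1) :=
      Finset.sum_congr rfl (fun k hk => by
        rw [Finset.mem_range] at hk; unfold gfun; split_ifs <;> first | exact (‹False›).elim | omega)
    rw [show (∑ j ∈ Finset.range s, (fun j => gfun s (3 * s + 1 + j)) (s - 1 - j))
        = ∑ j ∈ Finset.range s, gfun s (3 * s + 1 + (s - 1 - j)) from rfl, h', hA]
  have c1 := Finset.sum_Ico_consecutive (fun k => gfun s k)
    (show 0 ≤ s + 1 by omega) (show s + 1 ≤ 2 * s + 1 by omega)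
  have c2 := Finset.sum_Ico_consecutive (fun k => gfun s k)
    (show (0 : ℕ) ≤ 2 * s + 1 by omega) (show 2 * s + 1 ≤ 3 * s + 1 by omega)
  have c3 := Finset.sum_Ico_consecutive (fun k => gfun s k)
    (show (0 : ℕ) ≤ 3 * s + 1 by omega) (show 3 * s + 1 ≤ 4 * s + 1 by omega)
  have hG : (∑ k ∈ Finset.range s, k) * 2 + s * 2 = (s + 1) * s := by
    have h := Finset.sum_range_id_mul_two (s + 1)
    rw [Finset.sum_range_succ, Nat.add_sub_cancel] at h
    nlinarith [h]
  rw [Finset.range_eq_Ico, ← c3, ← c2, ← c1]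
  rw [← Finset.range_eq_Ico, e1, e2, e3, e4]
  nlinarith [hG]

end Stmt19

namespace Stmt19
variable {s : ℕ}

lemma sum_reindex (a : ZMod (4 * s + 1)) (f : ℕ → ℕ) :
    (∑ i ∈ Finset.range (4 * s + 1), f ((a - (i : ZMod (4 * s + 1))).val))
      = ∑ k ∈ Finset.range (4 * s + 1), f k := by
  have invol : ∀ i : ℕ, i < 4 * s + 1 →
      (a - (((a - (i : ZMod (4 * s + 1))).val : ℕ) : ZMod (4 * s + 1))).val = i := by
    intro i hi
    rw [castval, sub_sub_cancel]
    exact ZMod.val_cast_of_lt hi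
  refine Finset.sum_nbij' (fun i => (a - (i : ZMod (4 * s + 1))).val)
    (fun k => (a - (k : ZMod (4 * s + 1))).val) ?_ ?_ ?_ ?_ ?_
  · intro i _; exact Finset.mem_range.mpr (ZMod.val_lt _)
  · intro k _; exact Finset.mem_range.mpr (ZMod.val_lt _)
  · intro i hi; exact invol i (Finset.mem_range.mp hi)
  · intro k hk; exact invol k (Finset.mem_range.mp hk)
  · intro i _; rfl

end Stmt19

theorem stmt19 (s : ℕ) (hs : 0 < s)
    (t : Sym2 (Vtx s) → ℕ)
    (h1 : ∀ i : ℕ, i ≤ 4 * s → ∀ j : ℕ, 1 ≤ j → j ≤ s →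
      t (Sym2.mk (some (((j + i : ℕ) : ZMod (4 * s + 1))))
                  (some (((4 * s + 1 - j + i : ℕ) : ZMod (4 * s + 1)))))
        = j + i * (2 * s + 1))
    (h2 : ∀ i : ℕ, i ≤ 4 * s →
      t (Sym2.mk none (some ((i : ZMod (4 * s + 1)))))
        = s + 1 + i * (2 * s + 1))
    (h3 : ∀ i : ℕ, i ≤ 4 * s → ∀ j : ℕ, s + 2 ≤ j → j ≤ 2 * s + 1 →
      t (Sym2.mk (some (((j - 1 + i : ℕ) : ZMod (4 * s + 1))))
                  (some (((4 * s + 2 - j + i : ℕ) : ZMod (4 * s + 1)))))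
        = j + i * (2 * s + 1)) :
    Set.BijOn t {e : Sym2 (Vtx s) | ¬ e.IsDiag}
      (Set.Icc 1 ((2 * s + 1) * (4 * s + 1))) ∧
    (∀ v : Vtx s, (∑ e ∈ incV s v, t e) = (4 * s + 1) * (4 * s ^ 2 + 3 * s + 1)) ∧
    (∀ v : Vtx s, ∀ i : ℕ, i ≤ 4 * s →
      ((incV s v).image t ∩ Finset.Icc (i * (2 * s + 1) + 1) ((i + 1) * (2 * s + 1))).card
        = 1) := by
  classical
  -- `t` agrees with the canonical labeling on canonical edges
  have t_edg : ∀ i : ℕ, i ≤ 4 * s → ∀ j : ℕ, 1 ≤ j → j ≤ 2 * s + 1 →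
      t (Stmt19.edg s i j) = j + i * (2 * s + 1) := by
    intro i hi j hj1 hj2
    rcases Nat.lt_trichotomy j (s + 1) with hj | hj | hj
    · have hjs : j ≤ s := by omega
      have hrn : Stmt19.rn s j = j := if_pos hjs
      have e1 : ((j + i : ℕ) : ZMod (4 * s + 1))
          = (i : ZMod (4 * s + 1)) + ((Stmt19.rn s j : ℕ) : ZMod (4 * s + 1)) := by
        rw [hrn]; push_cast; ring
      have e2 : ((4 * s + 1 - j + i : ℕ) : ZMod (4 * s + 1))
          = (i : ZMod (4 * s + 1)) - ((Stmt19.rn s j : ℕ) : ZMod (4 * s + 1)) := by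
        rw [hrn, Nat.cast_add, Stmt19.cast_sub' (by omega)]; ring
      rw [Stmt19.edg_fin (by omega), ← e1, ← e2]
      exact h1 i hi j hj1 hjs
    · rw [hj, Stmt19.edg_inf]
      exact h2 i hi
    · have hjs : s + 2 ≤ j := by omega
      have hrn : Stmt19.rn s j = j - 1 := if_neg (by omega)
      have e1 : ((j - 1 + i : ℕ) : ZMod (4 * s + 1))
          = (i : ZMod (4 * s + 1)) + ((Stmt19.rn s j : ℕ) : ZMod (4 * s + 1)) := by
        rw [hrn, Nat.cast_add]; ring
      have e2 : ((4 * s + 2 - j + i : ℕ) : ZMod (4 * s + 1))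
          = (i : ZMod (4 * s + 1)) - ((Stmt19.rn s j : ℕ) : ZMod (4 * s + 1)) := by
        rw [hrn, Nat.cast_add, show 4 * s + 2 - j = 4 * s + 1 - (j - 1) by omega,
          Stmt19.cast_sub' (by omega)]
        ring
      rw [Stmt19.edg_fin (by omega), ← e1, ← e2]
      exact h3 i hi j hjs hj2
  -- characterization of incident edge sets
  have hinc : ∀ v : Vtx s, incV s v
      = Finset.image (fun i => Stmt19.edg s i (Stmt19.Jf s v i)) (Finset.range (4 * s + 1)) := by
    intro v
    ext e
    simp only [incV, Finset.mem_filter, Finset.mem_univ, true_and, Finset.mem_image,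
      Finset.mem_range]
    constructor
    · rintro ⟨hve, hnd⟩
      obtain ⟨i, j, hi, hj1, hj2, rfl⟩ := Stmt19.edg_surj e hnd
      exact ⟨i, by omega, by rw [← (Stmt19.mem_edg hj1 hj2).mp hve]⟩
    · rintro ⟨i, hi, rfl⟩
      obtain ⟨hb1, hb2⟩ := Stmt19.Jf_bounds v i
      exact ⟨(Stmt19.mem_edg hb1 hb2).mpr rfl, Stmt19.edg_not_diag hb1 hb2⟩
  have hIinj : ∀ v : Vtx s, ∀ x ∈ Finset.range (4 * s + 1), ∀ y ∈ Finset.range (4 * s + 1),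
      Stmt19.edg s x (Stmt19.Jf s v x) = Stmt19.edg s y (Stmt19.Jf s v y) → x = y := by
    intro v x hx y hy heq
    rw [Finset.mem_range] at hx hy
    obtain ⟨hb1, hb2⟩ := Stmt19.Jf_bounds v x
    obtain ⟨hb1', hb2'⟩ := Stmt19.Jf_bounds v y
    exact (Stmt19.edg_inj (by omega) (by omega) hb1 hb2 hb1' hb2' heq).1
  refine ⟨⟨?_, ?_, ?_⟩, ?_, ?_⟩
  · -- MapsTo
    intro e he
    simp only [Set.mem_setOf_eq] at he
    obtain ⟨i, j, hi, hj1, hj2, rfl⟩ := Stmt19.edg_surj e he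
    rw [Set.mem_Icc, t_edg i hi j hj1 hj2]
    have hmul : i * (2 * s + 1) ≤ 4 * s * (2 * s + 1) := Nat.mul_le_mul_right _ hi
    have hr : 2 * s + 1 + 4 * s * (2 * s + 1) = (2 * s + 1) * (4 * s + 1) := by ring
    omega
  · -- InjOn
    intro e he e' he' heq
    simp only [Set.mem_setOf_eq] at he he'
    obtain ⟨i, j, hi, hj1, hj2, rfl⟩ := Stmt19.edg_surj e he
    obtain ⟨i', j', hi', hj1', hj2', rfl⟩ := Stmt19.edg_surj e' he'
    rw [t_edg i hi j hj1 hj2, t_edg i' hi' j' hj1' hj2'] at heq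
    have hii : i = i' := by
      rcases Nat.lt_trichotomy i i' with hlt | hE | hlt
      · exfalso
        have h5 : (i + 1) * (2 * s + 1) ≤ i' * (2 * s + 1) := Nat.mul_le_mul_right _ hlt
        have h6 : (i + 1) * (2 * s + 1) = i * (2 * s + 1) + (2 * s + 1) := by ring
        omega
      · exact hE
      · exfalso
        have h5 : (i' + 1) * (2 * s + 1) ≤ i * (2 * s + 1) := Nat.mul_le_mul_right _ hlt
        have h6 : (i' + 1) * (2 * s + 1) = i' * (2 * s + 1) + (2 * s + 1) := by ring
        omega
    subst hii
    have hjj : j = j' := by omega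
    rw [hjj]
  · -- SurjOn
    intro m hm
    rw [Set.mem_Icc] at hm
    set q := (m - 1) / (2 * s + 1) with hq
    set r := (m - 1) % (2 * s + 1) with hr
    have hrlt : r < 2 * s + 1 := Nat.mod_lt _ (by omega)
    have key : (2 * s + 1) * q + r = m - 1 := Nat.div_add_mod _ _
    have hqle : q ≤ 4 * s := by
      have h9 : m - 1 < (4 * s + 1) * (2 * s + 1) := by
        have h10 : (4 * s + 1) * (2 * s + 1) = (2 * s + 1) * (4 * s + 1) := by ring
        omega
      have h11 := (Nat.div_lt_iff_lt_mul (show 0 < 2 * s + 1 by omega)).mpr h9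
      omega
    refine ⟨Stmt19.edg s q (r + 1), ?_, ?_⟩
    · simp only [Set.mem_setOf_eq]
      exact Stmt19.edg_not_diag (by omega) (by omega)
    · rw [t_edg q hqle (r + 1) (by omega) (by omega)]
      have h11 : q * (2 * s + 1) = (2 * s + 1) * q := by ring
      omega
  · -- vertex sums
    intro v
    rw [hinc v, Finset.sum_image (hIinj v)]
    have hcg : ∀ i ∈ Finset.range (4 * s + 1),
        t (Stmt19.edg s i (Stmt19.Jf s v i)) = Stmt19.Jf s v i + i * (2 * s + 1) := by
      intro i hi
      rw [Finset.mem_range] at hi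
      obtain ⟨hb1, hb2⟩ := Stmt19.Jf_bounds v i
      exact t_edg i (by omega) _ hb1 hb2
    rw [Finset.sum_congr rfl hcg, Finset.sum_add_distrib, ← Finset.sum_mul]
    have hJ : (∑ i ∈ Finset.range (4 * s + 1), Stmt19.Jf s v i) = (s + 1) * (4 * s + 1) := by
      cases v with
      | none =>
        simp only [Stmt19.Jf]
        rw [Finset.sum_const, Finset.card_range, smul_eq_mul]
        ring
      | some a =>
        have : (∑ i ∈ Finset.range (4 * s + 1), Stmt19.Jf s (some a) i)
            = ∑ i ∈ Finset.range (4 * s + 1),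
                Stmt19.gfun s ((a - (i : ZMod (4 * s + 1))).val) := rfl
        rw [this, Stmt19.sum_reindex a (Stmt19.gfun s), Stmt19.sum_gfun]
    rw [hJ]
    have hG2 : (∑ i ∈ Finset.range (4 * s + 1), i) * 2 = (4 * s + 1) * (4 * s) := by
      have := Finset.sum_range_id_mul_two (4 * s + 1)
      rw [Nat.add_sub_cancel] at this
      exact this
    have h12 : (∑ i ∈ Finset.range (4 * s + 1), i) * 2 * (2 * s + 1)
        = (4 * s + 1) * (4 * s) * (2 * s + 1) := by rw [hG2]
    ring_nf at h12 ⊢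
    linarith [h12]
  · -- intervals
    intro v i hi
    have him : (incV s v).image t
        = Finset.image (fun i' => Stmt19.Jf s v i' + i' * (2 * s + 1))
            (Finset.range (4 * s + 1)) := by
      rw [hinc v, Finset.image_image]
      apply Finset.image_congr
      intro x hx
      simp only [Finset.coe_range, Set.mem_Iio] at hx
      simp only [Function.comp_apply]
      obtain ⟨hb1, hb2⟩ := Stmt19.Jf_bounds v x
      exact t_edg x (by omega) _ hb1 hb2
    rw [him, Finset.card_eq_one]
    refine ⟨Stmt19.Jf s v i + i * (2 * s + 1), ?_⟩
    ext m
    simp only [Finset.mem_inter, Finset.mem_image, Finset.mem_range, Finset.mem_Icc,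
      Finset.mem_singleton]
    constructor
    · rintro ⟨⟨i', hi', rfl⟩, hlo, hhi⟩
      obtain ⟨hb1, hb2⟩ := Stmt19.Jf_bounds v i'
      have : i' = i := by
        rcases Nat.lt_trichotomy i' i with hlt | hE | hlt
        · exfalso
          have h5 : (i' + 1) * (2 * s + 1) ≤ i * (2 * s + 1) := Nat.mul_le_mul_right _ hlt
          have h6 : (i' + 1) * (2 * s + 1) = i' * (2 * s + 1) + (2 * s + 1) := by ring
          omega
        · exact hE
        · exfalso
          have h5 : (i + 1) * (2 * s + 1) ≤ i' * (2 * s + 1) := Nat.mul_le_mul_right _ hlt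
          have h6 : (i + 1) * (2 * s + 1) = i * (2 * s + 1) + (2 * s + 1) := by ring
          omega
      rw [this]
    · rintro rfl
      obtain ⟨hb1, hb2⟩ := Stmt19.Jf_bounds v i
      have h6 : (i + 1) * (2 * s + 1) = i * (2 * s + 1) + (2 * s + 1) := by ring
      exact ⟨⟨i, by omega, rfl⟩, by omega, by omega⟩

end
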